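/- arXiv:cond-mat/9903253 — 6 statements merged into one kernel-verified Lean document; each statement's English description precedes it below -/
import Mathlib

section
/- Let H(s)=(A₀+s)²−1 with A₀ ∈ [−1,0] and h>0. Suppose ρ solves ρ' = (H−ρ²)/h on [0,∞) with ρ(0)=0, ρ' ≤ 0 and −s < ρ(s) < 0 for all s>0. If additionally ρ' is bounded, then ρ(s) + √(H(s)) → 0 as s → ∞. -/
open Set Filter

lemma sqrt_tendsto_atTop' : Tendsto Real.sqrt atTop atTop := by
  apply tendsto_atTop_atTop.2
  intro b
  refine ⟨b ^ 2, fun a ha => ?_⟩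
  rcases le_or_gt b 0 with hb | hb
  · exact hb.trans (Real.sqrt_nonneg a)
  · have : b = Real.sqrt (b ^ 2) := by
      rw [Real.sqrt_sq hb.le]
    rw [this]
    exact Real.sqrt_le_sqrt ha

/-- If the Riccati solution stays in the strip -s < ρ < 0 with ρ' ≤ 0 and
ρ' bounded, then ρ(s) + √(H(s)) → 0 as s → ∞. -/
theorem stmt_4 (A₀ h : ℝ) (hA : A₀ ∈ Icc (-1:ℝ) 0) (hh : 0 < h)
    (ρ : ℝ → ℝ) (hρ0 : ρ 0 = 0)
    (hode : ∀ s ∈ Ici (0:ℝ),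
      HasDerivAt ρ (((A₀ + s)^2 - 1 - (ρ s)^2) / h) s)
    (hdec : ∀ s ∈ Ici (0:ℝ), deriv ρ s ≤ 0)
    (hstrip : ∀ s ∈ Ioi (0:ℝ), -s < ρ s ∧ ρ s < 0)
    (hbdd : ∃ C : ℝ, ∀ s ∈ Ici (0:ℝ), |deriv ρ s| ≤ C) :
    Tendsto (fun s => ρ s + Real.sqrt ((A₀ + s)^2 - 1)) atTop (nhds 0) := by
  obtain ⟨C, hC⟩ := hbdd
  have hC0 : 0 ≤ C := (abs_nonneg _).trans (hC 0 self_mem_Ici)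
  -- the bounding function
  have hg : Tendsto (fun s : ℝ => h * C / Real.sqrt (s * (s - 2))) atTop (nhds 0) := by
    apply Tendsto.div_atTop tendsto_const_nhds
    apply sqrt_tendsto_atTop'.comp
    apply tendsto_atTop_mono' _ _ tendsto_id
    filter_upwards [eventually_ge_atTop (3:ℝ)] with s hs
    simp only [id]
    nlinarith [mul_nonneg (by linarith : (0:ℝ) ≤ s) (by linarith : (0:ℝ) ≤ s - 3)]
  apply squeeze_zero_norm' _ hg
  filter_upwards [eventually_ge_atTop (3:ℝ)] with s hs
  have hs0 : (0:ℝ) ≤ s := by linarith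
  have hρneg : ρ s < 0 := (hstrip s (by simp; linarith)).2
  set H : ℝ := (A₀ + s) ^ 2 - 1 with hHdef
  have hx2 : 2 ≤ A₀ + s := by linarith [hA.1]
  have hH3 : (3:ℝ) ≤ H := by nlinarith
  have hHlb : s * (s - 2) ≤ H := by nlinarith [hA.1, hA.2]
  have hsqH : Real.sqrt H ^ 2 = H := Real.sq_sqrt (by linarith)
  have hsqHpos : 0 < Real.sqrt H := Real.sqrt_pos.2 (by linarith)
  -- derivative bound gives |H - ρ²| ≤ h C
  have hderiv : deriv ρ s = (H - (ρ s) ^ 2) / h := (hode s hs0).deriv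
  have habs : |H - (ρ s) ^ 2| ≤ h * C := by
    have := hC s hs0
    rw [hderiv, abs_div, abs_of_pos hh] at this
    calc |H - (ρ s) ^ 2| = h * (|H - (ρ s) ^ 2| / h) := by field_simp
    _ ≤ h * C := by nlinarith
  -- factor
  have hfact : H - (ρ s) ^ 2 = (Real.sqrt H + ρ s) * (Real.sqrt H - ρ s) := by
    nlinarith [hsqH]
  have hdenpos : 0 < Real.sqrt H - ρ s := by linarith
  have key : |ρ s + Real.sqrt H| * Real.sqrt H ≤ h * C := by
    calc |ρ s + Real.sqrt H| * Real.sqrt H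
        ≤ |ρ s + Real.sqrt H| * (Real.sqrt H - ρ s) := by
          apply mul_le_mul_of_nonneg_left (by linarith) (abs_nonneg _)
      _ = |H - (ρ s) ^ 2| := by
          rw [hfact, abs_mul, abs_of_pos hdenpos, add_comm]
      _ ≤ h * C := habs
  have hsqle : Real.sqrt (s * (s - 2)) ≤ Real.sqrt H := Real.sqrt_le_sqrt hHlb
  rw [Real.norm_eq_abs]
  rcases eq_or_lt_of_le (Real.sqrt_nonneg (s * (s - 2))) with h0 | hpos'
  · rw [← h0] at hsqle ⊢
    -- sqrt (s*(s-2)) = 0 case: but s ≥ 3 makes it positive; still handle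
    exfalso
    have : 0 < s * (s - 2) := by nlinarith
    exact absurd (Real.sqrt_pos.2 this) (by rw [← h0]; simp)
  · rw [le_div_iff₀ hpos']
    calc |ρ s + Real.sqrt H| * Real.sqrt (s * (s - 2))
        ≤ |ρ s + Real.sqrt H| * Real.sqrt H :=
          mul_le_mul_of_nonneg_left hsqle (abs_nonneg _)
      _ ≤ h * C := key
end

section
/- Let H(s)=(A₀+s)²−1 with A₀ ∈ [−1,0] and let 0 < h₁ < h₀. Suppose ρ₀, ρ₁ solve ρᵢ' = (H−ρᵢ²)/hᵢ with ρᵢ(0)=0, and both satisfy ρᵢ' ≤ 0, −s < ρᵢ(s) < 0, and ρᵢ(s)+√(H(s)) → 0 as s → ∞. Then a contradiction follows; i.e., there is at most one h > 0 for which the solution of the Riccati equation with ρ(0)=0 stays in the strip −s < ρ < 0 with ρ' ≤ 0 and ρ+√H → 0. -/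
/-!
Put `δ = ρ₁ - ρ₀`. Since `ρ₁' ≤ 0` means `H ≤ ρ₁²`, and `h₁ < h₀`, the two equations give
`δ' ≤ -((ρ₀ + ρ₁) / h₀) δ`; with `δ(0) = 0` the integrating factor `exp (∫ (ρ₀ + ρ₁) / h₀)`
yields `δ ≤ 0`. As `ρ₀ + ρ₁ < 0`, the same inequality then gives `δ' ≤ 0`, and a nonincreasing
`δ` with `δ → 0` at infinity is `≥ 0`. Hence `ρ₀ = ρ₁` on `[0, ∞)`, and comparing the two
equations forces `H = ρ₀²`, i.e. `ρ₀' = 0` on `(0, ∞)`; so `ρ₀ ≡ ρ₀(0) = 0`, contradicting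
`ρ₀ < 0`.
-/

open Set Filter Topology

theorem ContinuousOn.exists_hasDerivAt_of_Ici {g : ℝ → ℝ} {a : ℝ} (hg : ContinuousOn g (Ici a)) :
    ∃ G : ℝ → ℝ, ∀ s ∈ Ici a, HasDerivAt G (g s) s := by
  have hcont : Continuous fun t => g (max t a) :=
    hg.comp_continuous (continuous_id.max continuous_const) fun t => le_max_right t a
  refine ⟨fun s => ∫ t in a..s, g (max t a), fun s hs => ?_⟩
  simpa [max_eq_left (mem_Ici.mp hs)] using (hcont.integral_hasStrictDerivAt a s).hasDerivAt

theorem antitoneOn_Ici_of_hasDerivAt_nonpos {f f' : ℝ → ℝ} {a : ℝ}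
    (hf : ∀ s ∈ Ici a, HasDerivAt f (f' s) s) (hf' : ∀ s ∈ Ioi a, f' s ≤ 0) :
    AntitoneOn f (Ici a) :=
  antitoneOn_of_hasDerivWithinAt_nonpos (convex_Ici a)
    (fun s hs => (hf s hs).continuousAt.continuousWithinAt)
    (fun s hs => (hf s (mem_Ici.mpr (interior_Ici.subset hs).out.le)).hasDerivWithinAt)
    (fun s hs => hf' s (interior_Ici.subset hs))

/-- Grönwall-type comparison, via the integrating factor `exp (-∫ g)`. -/
theorem nonpos_of_hasDerivAt_le_mul_self {δ δ' g : ℝ → ℝ} {a : ℝ} (hg : ContinuousOn g (Ici a))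
    (hδ : ∀ s ∈ Ici a, HasDerivAt δ (δ' s) s) (ha : δ a ≤ 0)
    (hle : ∀ s ∈ Ioi a, δ' s ≤ g s * δ s) : ∀ s ∈ Ici a, δ s ≤ 0 := by
  obtain ⟨G, hG⟩ := hg.exists_hasDerivAt_of_Ici
  have hψ : ∀ s ∈ Ici a, HasDerivAt (fun t => δ t * Real.exp (-G t))
      ((δ' s - g s * δ s) * Real.exp (-G s)) s := fun s hs =>
    ((hδ s hs).fun_mul (hG s hs).fun_neg.exp).congr_deriv (by ring)
  have hanti : AntitoneOn (fun t => δ t * Real.exp (-G t)) (Ici a) :=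
    antitoneOn_Ici_of_hasDerivAt_nonpos hψ fun s hs =>
      mul_nonpos_of_nonpos_of_nonneg (sub_nonpos.mpr (hle s hs)) (Real.exp_pos _).le
  intro s hs
  have hψs : δ s * Real.exp (-G s) ≤ 0 :=
    (hanti self_mem_Ici hs hs).trans (mul_nonpos_of_nonpos_of_nonneg ha (Real.exp_pos _).le)
  exact nonpos_of_mul_nonpos_left hψs (Real.exp_pos _)

section Riccati

variable {H ρ₀ ρ₁ : ℝ → ℝ} {h₀ h₁ a : ℝ}

theorem le_sq_of_riccati_deriv_nonpos {ρ : ℝ → ℝ} {h s : ℝ} (hh : 0 < h)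
    (hρ : HasDerivAt ρ ((H s - ρ s ^ 2) / h) s) (hdec : deriv ρ s ≤ 0) : H s ≤ ρ s ^ 2 := by
  rw [hρ.deriv] at hdec
  simpa using (div_le_iff₀ hh).mp hdec

theorem riccati_rhs_sub_le {H r₀ r₁ h₀ h₁ : ℝ} (hh₁ : 0 < h₁) (hh : h₁ ≤ h₀) (hH : H ≤ r₁ ^ 2) :
    (H - r₁ ^ 2) / h₁ - (H - r₀ ^ 2) / h₀ ≤ -((r₀ + r₁) / h₀) * (r₁ - r₀) := by
  have hdiv : (H - r₁ ^ 2) / h₁ ≤ (H - r₁ ^ 2) / h₀ := by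
    rw [div_le_div_iff₀ hh₁ (hh₁.trans_le hh)]
    nlinarith
  have hsq : (H - r₁ ^ 2) / h₀ - (H - r₀ ^ 2) / h₀ = -((r₀ + r₁) / h₀) * (r₁ - r₀) := by ring
  linarith

theorem riccati_eqOn (hh₁ : 0 < h₁) (hh : h₁ ≤ h₀)
    (hρ₀ : ∀ s ∈ Ici a, HasDerivAt ρ₀ ((H s - ρ₀ s ^ 2) / h₀) s)
    (hρ₁ : ∀ s ∈ Ici a, HasDerivAt ρ₁ ((H s - ρ₁ s ^ 2) / h₁) s)
    (hH : ∀ s ∈ Ici a, H s ≤ ρ₁ s ^ 2) (ha : ρ₁ a ≤ ρ₀ a) (hneg : ∀ s ∈ Ioi a, ρ₀ s + ρ₁ s ≤ 0)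
    (hlim : Tendsto (fun s => ρ₁ s - ρ₀ s) atTop (𝓝 0)) : EqOn ρ₀ ρ₁ (Ici a) := by
  have hδ : ∀ s ∈ Ici a, HasDerivAt (fun t => ρ₁ t - ρ₀ t)
      ((H s - ρ₁ s ^ 2) / h₁ - (H s - ρ₀ s ^ 2) / h₀) s := fun s hs =>
    (hρ₁ s hs).sub (hρ₀ s hs)
  have hle : ∀ s ∈ Ici a, ρ₁ s - ρ₀ s ≤ 0 :=
    nonpos_of_hasDerivAt_le_mul_self (g := fun s => -((ρ₀ s + ρ₁ s) / h₀))
      (fun s hs => (((hρ₀ s hs).continuousAt.add (hρ₁ s hs).continuousAt).div_const h₀).neg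
        |>.continuousWithinAt)
      hδ (sub_nonpos.mpr ha) (fun s hs => riccati_rhs_sub_le hh₁ hh (hH s (mem_Ici.mpr hs.out.le)))
  have hanti : AntitoneOn (fun s => ρ₁ s - ρ₀ s) (Ici a) := by
    refine antitoneOn_Ici_of_hasDerivAt_nonpos hδ fun s hs => ?_
    have hs' : s ∈ Ici a := mem_Ici.mpr hs.out.le
    have hcoef : 0 ≤ -((ρ₀ s + ρ₁ s) / h₀) :=
      neg_nonneg.mpr (div_nonpos_of_nonpos_of_nonneg (hneg s hs) (hh₁.le.trans hh))
    exact (riccati_rhs_sub_le hh₁ hh (hH s hs')).trans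
      (mul_nonpos_of_nonneg_of_nonpos hcoef (hle s hs'))
  intro s hs
  have hnonneg : 0 ≤ ρ₁ s - ρ₀ s := by
    refine le_of_tendsto hlim ?_
    filter_upwards [eventually_ge_atTop s] with t ht
    exact hanti hs (mem_Ici.mpr (hs.out.trans ht)) ht
  linarith [hle s hs]

theorem riccati_rhs_eq_zero_of_eqOn (hne : h₀ ≠ h₁) (hh₀ : h₀ ≠ 0) (hh₁ : h₁ ≠ 0)
    (heq : EqOn ρ₀ ρ₁ (Ici a))
    (hρ₀ : ∀ s ∈ Ici a, HasDerivAt ρ₀ ((H s - ρ₀ s ^ 2) / h₀) s)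
    (hρ₁ : ∀ s ∈ Ici a, HasDerivAt ρ₁ ((H s - ρ₁ s ^ 2) / h₁) s) :
    ∀ s ∈ Ioi a, H s - ρ₀ s ^ 2 = 0 := by
  intro s hs
  have hs' : s ∈ Ici a := mem_Ici.mpr hs.out.le
  have hev : ρ₀ =ᶠ[𝓝 s] ρ₁ :=
    eventually_of_mem (Ioi_mem_nhds hs) fun t ht => heq (mem_Ici.mpr ht.out.le)
  have h := ((hρ₁ s hs').congr_of_eventuallyEq hev).unique (hρ₀ s hs')
  rw [← heq hs', div_eq_div_iff hh₁ hh₀] at h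
  by_contra hx
  exact hne (mul_left_cancel₀ hx h)

end Riccati

theorem stmt_5_general (A₀ h₀ h₁ : ℝ)
    (hh₁ : 0 < h₁) (hlt : h₁ < h₀)
    (ρ₀ ρ₁ : ℝ → ℝ) (hρ₀0 : ρ₀ 0 = 0) (hρ₁0 : ρ₁ 0 = 0)
    (hode₀ : ∀ s ∈ Ici (0:ℝ),
      HasDerivAt ρ₀ (((A₀ + s)^2 - 1 - (ρ₀ s)^2) / h₀) s)
    (hode₁ : ∀ s ∈ Ici (0:ℝ),
      HasDerivAt ρ₁ (((A₀ + s)^2 - 1 - (ρ₁ s)^2) / h₁) s)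
    (hdec₁ : ∀ s ∈ Ici (0:ℝ), deriv ρ₁ s ≤ 0)
    (hstrip₀ : ∀ s ∈ Ioi (0:ℝ), -s < ρ₀ s ∧ ρ₀ s < 0)
    (hstrip₁ : ∀ s ∈ Ioi (0:ℝ), -s < ρ₁ s ∧ ρ₁ s < 0)
    (hlim₀ : Tendsto (fun s => ρ₀ s + Real.sqrt ((A₀ + s)^2 - 1)) atTop (nhds 0))
    (hlim₁ : Tendsto (fun s => ρ₁ s + Real.sqrt ((A₀ + s)^2 - 1)) atTop (nhds 0)) :
    False := by
  have hH : ∀ s ∈ Ici (0:ℝ), (A₀ + s) ^ 2 - 1 ≤ ρ₁ s ^ 2 := fun s hs =>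
    le_sq_of_riccati_deriv_nonpos (H := fun s => (A₀ + s) ^ 2 - 1) hh₁ (hode₁ s hs) (hdec₁ s hs)
  have heq : EqOn ρ₀ ρ₁ (Ici 0) :=
    riccati_eqOn (H := fun s => (A₀ + s) ^ 2 - 1) hh₁ hlt.le hode₀ hode₁ hH (by rw [hρ₀0, hρ₁0])
      (fun s hs => by linarith [hstrip₀ s hs, hstrip₁ s hs]) (by simpa using hlim₁.sub hlim₀)
  have hrhs := riccati_rhs_eq_zero_of_eqOn (H := fun s => (A₀ + s) ^ 2 - 1) hlt.ne'
    (hh₁.trans hlt).ne' hh₁.ne' heq hode₀ hode₁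
  obtain ⟨c, hc, hslope⟩ := exists_hasDerivAt_eq_slope ρ₀
    (fun s => ((A₀ + s) ^ 2 - 1 - ρ₀ s ^ 2) / h₀) one_pos
    (fun s hs => (hode₀ s hs.1).continuousAt.continuousWithinAt) (fun s hs => hode₀ s hs.1.le)
  have hρ₀1 : ρ₀ 1 < 0 := (hstrip₀ 1 (mem_Ioi.mpr one_pos)).2
  rw [hrhs c hc.1, hρ₀0] at hslope
  norm_num at hslope
  linarith

/-- Uniqueness of the critical slope h₀: two distinct values h₁ < h₀ cannot
both yield Riccati solutions staying in the strip with ρ + √H → 0. -/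
theorem stmt_5 (A₀ h₀ h₁ : ℝ) (hA : A₀ ∈ Icc (-1:ℝ) 0)
    (hh₁ : 0 < h₁) (hlt : h₁ < h₀)
    (ρ₀ ρ₁ : ℝ → ℝ) (hρ₀0 : ρ₀ 0 = 0) (hρ₁0 : ρ₁ 0 = 0)
    (hode₀ : ∀ s ∈ Ici (0:ℝ),
      HasDerivAt ρ₀ (((A₀ + s)^2 - 1 - (ρ₀ s)^2) / h₀) s)
    (hode₁ : ∀ s ∈ Ici (0:ℝ),
      HasDerivAt ρ₁ (((A₀ + s)^2 - 1 - (ρ₁ s)^2) / h₁) s)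
    (hdec₀ : ∀ s ∈ Ici (0:ℝ), deriv ρ₀ s ≤ 0)
    (hdec₁ : ∀ s ∈ Ici (0:ℝ), deriv ρ₁ s ≤ 0)
    (hstrip₀ : ∀ s ∈ Ioi (0:ℝ), -s < ρ₀ s ∧ ρ₀ s < 0)
    (hstrip₁ : ∀ s ∈ Ioi (0:ℝ), -s < ρ₁ s ∧ ρ₁ s < 0)
    (hlim₀ : Tendsto (fun s => ρ₀ s + Real.sqrt ((A₀ + s)^2 - 1)) atTop (nhds 0))
    (hlim₁ : Tendsto (fun s => ρ₁ s + Real.sqrt ((A₀ + s)^2 - 1)) atTop (nhds 0)) :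
    False :=
  stmt_5_general A₀ h₀ h₁ hh₁ hlt ρ₀ ρ₁ hρ₀0 hρ₁0 hode₀ hode₁ hdec₁ hstrip₀ hstrip₁ hlim₀ hlim₁
end

section
/- Suppose ρ̂ solves ρ̂' = H(ht) − ρ̂² on an interval, with ρ̂(0)=0, where H is smooth, and at some t₁>0 we have ρ̂ < 0, ρ̂' < 0, ρ̂'' < 0 on (0,t₁] and ρ̂'''(t₁) < 0. If ρ̂''' satisfies the identity ρ̂'''' + 2ρ̂ρ̂''' = −6ρ̂'ρ̂'', then ρ̂''' < 0 for all t ≥ t₁ (as long as the solution exists), and hence ρ̂ decreases monotonically with ρ̂', ρ̂'', ρ̂''' all negative beyond t₁. -/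
open Set

private lemma iterDeriv_cont_on_open {f : ℝ → ℝ} {s : Set ℝ} (hs : IsOpen s)
    (hf : ContDiffOn ℝ 4 f s) {m : ℕ} (hm : (m:ℕ∞) ≤ 4) :
    ContinuousOn (iteratedDeriv m f) s := by
  have h1 := hf.continuousOn_iteratedDerivWithin (m := m) (by exact_mod_cast hm)
    hs.uniqueDiffOn
  refine h1.congr fun x hx => ?_
  rw [iteratedDerivWithin_eq_iteratedFDerivWithin, iteratedDeriv_eq_iteratedFDeriv,
    iteratedFDerivWithin_of_isOpen m hs hx]

/-- If ρ̂, ρ̂', ρ̂'' are negative on (0,t₁] and ρ̂'''(t₁) < 0, and the identity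
ρ̂'''' + 2 ρ̂ ρ̂''' = -6 ρ̂' ρ̂'' holds, then ρ̂', ρ̂'', ρ̂''' remain negative for
t ≥ t₁ as long as the solution exists. -/
theorem stmt_7 (T t₁ : ℝ) (ht₁ : t₁ ∈ Ioo 0 T)
    (H : ℝ → ℝ) (hH : ContDiff ℝ (⊤ : ℕ∞) H) (h : ℝ)
    (ρ : ℝ → ℝ) (hρ : ContDiffOn ℝ 4 ρ (Ico 0 T)) (hρ0 : ρ 0 = 0)
    (hode : ∀ t ∈ Ico (0:ℝ) T, deriv ρ t = H (h * t) - (ρ t)^2)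
    (hid : ∀ t ∈ Ico (0:ℝ) T,
      iteratedDeriv 4 ρ t + 2 * ρ t * iteratedDeriv 3 ρ t
        = -6 * deriv ρ t * iteratedDeriv 2 ρ t)
    (hneg : ∀ t ∈ Ioc (0:ℝ) t₁,
      ρ t < 0 ∧ deriv ρ t < 0 ∧ iteratedDeriv 2 ρ t < 0)
    (h3 : iteratedDeriv 3 ρ t₁ < 0) :
    ∀ t ∈ Ico t₁ T,
      deriv ρ t < 0 ∧ iteratedDeriv 2 ρ t < 0 ∧ iteratedDeriv 3 ρ t < 0 := by
  obtain ⟨ht₁0, ht₁T⟩ := ht₁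
  set P : ℝ → Prop := fun s =>
    ρ s < 0 ∧ deriv ρ s < 0 ∧ iteratedDeriv 2 ρ s < 0 ∧ iteratedDeriv 3 ρ s < 0 with hP
  have hρ' : ContDiffOn ℝ 4 ρ (Ioo 0 T) := hρ.mono Ioo_subset_Ico_self
  -- continuity of the derivatives on the open interval
  have hc0 : ContinuousOn ρ (Ioo 0 T) := by
    have := iterDeriv_cont_on_open isOpen_Ioo hρ' (m := 0) (by norm_num)
    simpa [iteratedDeriv_zero] using this
  have hc1 : ContinuousOn (deriv ρ) (Ioo 0 T) := by
    have := iterDeriv_cont_on_open isOpen_Ioo hρ' (m := 1) (by norm_num)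
    simpa [iteratedDeriv_one] using this
  have hc2 : ContinuousOn (iteratedDeriv 2 ρ) (Ioo 0 T) :=
    iterDeriv_cont_on_open isOpen_Ioo hρ' (by norm_num)
  have hc3 : ContinuousOn (iteratedDeriv 3 ρ) (Ioo 0 T) :=
    iterDeriv_cont_on_open isOpen_Ioo hρ' (by norm_num)
  -- derivative identities (as functions)
  have hd1 : deriv (deriv ρ) = iteratedDeriv 2 ρ := by
    rw [show (2:ℕ) = 1 + 1 from rfl, iteratedDeriv_succ, iteratedDeriv_one]
  have hd2 : deriv (iteratedDeriv 2 ρ) = iteratedDeriv 3 ρ := (iteratedDeriv_succ).symm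
  have hd3 : deriv (iteratedDeriv 3 ρ) = iteratedDeriv 4 ρ := (iteratedDeriv_succ).symm
  have hPt₁ : P t₁ := by
    obtain ⟨a, b, c⟩ := hneg t₁ ⟨ht₁0, le_refl _⟩
    exact ⟨a, b, c, h3⟩
  -- main claim
  have key : ∀ t ∈ Ico t₁ T, P t := by
    rintro t ⟨htt₁, htT⟩
    by_contra hPt
    set B : Set ℝ := {s | s ∈ Icc t₁ t ∧ ¬ P s} with hB
    have hne : B.Nonempty := ⟨t, ⟨htt₁, le_refl _⟩, hPt⟩
    have hbdd : BddBelow B := ⟨t₁, fun x hx => hx.1.1⟩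
    set b := sInf B with hb
    have hbt₁ : t₁ ≤ b := le_csInf hne fun x hx => hx.1.1
    have hbt : b ≤ t := by
      obtain ⟨x, hx⟩ := hne
      exact le_trans (csInf_le hbdd hx) hx.1.2
    have hbIoo : b ∈ Ioo 0 T := ⟨lt_of_lt_of_le ht₁0 hbt₁, lt_of_le_of_lt hbt htT⟩
    have hIccsub : Icc t₁ b ⊆ Ioo 0 T := fun s hs =>
      ⟨lt_of_lt_of_le ht₁0 hs.1, lt_of_le_of_lt (hs.2.trans hbt) htT⟩
    -- P holds on [t₁, b)
    have hPIco : ∀ s ∈ Ico t₁ b, P s := by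
      rintro s ⟨hs1, hs2⟩
      by_contra hc
      exact absurd (csInf_le hbdd ⟨⟨hs1, hs2.le.trans hbt⟩, hc⟩) (not_le.mpr hs2)
    -- P holds at b
    have hPb : P b := by
      rcases eq_or_lt_of_le hbt₁ with heq | hlt
      · rwa [← heq]
      · have hint : interior (Icc t₁ b) = Ioo t₁ b := interior_Icc
        have hIoosub : Ioo t₁ b ⊆ Ico t₁ b := Ioo_subset_Ico_self
        have hmemIcc : ∀ s ∈ Icc t₁ b, s ∈ Ioo 0 T := fun s hs => hIccsub hs
        -- each function is strictly antitone on [t₁, b]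
        have hA0 : StrictAntiOn ρ (Icc t₁ b) := by
          refine strictAntiOn_of_deriv_neg (convex_Icc _ _) (hc0.mono hIccsub) fun x hx => ?_
          rw [hint] at hx
          exact (hPIco x (hIoosub hx)).2.1
        have hA1 : StrictAntiOn (deriv ρ) (Icc t₁ b) := by
          refine strictAntiOn_of_deriv_neg (convex_Icc _ _) (hc1.mono hIccsub) fun x hx => ?_
          rw [hint] at hx
          rw [hd1]
          exact (hPIco x (hIoosub hx)).2.2.1
        have hA2 : StrictAntiOn (iteratedDeriv 2 ρ) (Icc t₁ b) := by
          refine strictAntiOn_of_deriv_neg (convex_Icc _ _) (hc2.mono hIccsub) fun x hx => ?_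
          rw [hint] at hx
          rw [hd2]
          exact (hPIco x (hIoosub hx)).2.2.2
        have hA3 : StrictAntiOn (iteratedDeriv 3 ρ) (Icc t₁ b) := by
          refine strictAntiOn_of_deriv_neg (convex_Icc _ _) (hc3.mono hIccsub) fun x hx => ?_
          rw [hint] at hx
          rw [hd3]
          obtain ⟨p0, p1, p2, p3⟩ := hPIco x (hIoosub hx)
          have hx' : x ∈ Ico (0:ℝ) T := by
            have hm := hmemIcc x (Ioo_subset_Icc_self hx)
            exact ⟨hm.1.le, hm.2⟩
          have := hid x hx'
          nlinarith
        have hm1 : t₁ ∈ Icc t₁ b := ⟨le_refl _, hbt₁⟩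
        have hm2 : b ∈ Icc t₁ b := ⟨hbt₁, le_refl _⟩
        obtain ⟨p0, p1, p2, p3⟩ := hPt₁
        exact ⟨(hA0 hm1 hm2 hlt).trans p0, (hA1 hm1 hm2 hlt).trans p1,
          (hA2 hm1 hm2 hlt).trans p2, (hA3 hm1 hm2 hlt).trans p3⟩
    -- P holds in a neighborhood of b; contradiction with sInf
    have hnhds : Ioo (0:ℝ) T ∈ nhds b := isOpen_Ioo.mem_nhds hbIoo
    have hev : ∀ᶠ s in nhds b, P s := by
      have e0 := (hc0.continuousAt hnhds).eventually_lt continuousAt_const hPb.1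
      have e1 := (hc1.continuousAt hnhds).eventually_lt continuousAt_const hPb.2.1
      have e2 := (hc2.continuousAt hnhds).eventually_lt continuousAt_const hPb.2.2.1
      have e3 := (hc3.continuousAt hnhds).eventually_lt continuousAt_const hPb.2.2.2
      filter_upwards [e0, e1, e2, e3] with s a0 a1 a2 a3
      exact ⟨a0, a1, a2, a3⟩
    rw [Metric.eventually_nhds_iff] at hev
    obtain ⟨ε, hε, hball⟩ := hev
    obtain ⟨x, hxB, hxlt⟩ := (csInf_lt_iff hbdd hne).mp (by linarith : sInf B < b + ε)
    have hbx : b ≤ x := csInf_le hbdd hxB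
    have : P x := hball (by rw [Real.dist_eq, abs_of_nonneg (by linarith)]; linarith)
    exact hxB.2 this
  intro t ht
  obtain ⟨_, p1, p2, p3⟩ := key t ht
  exact ⟨p1, p2, p3⟩
end

section
/- Let h⁰>0 and suppose ψ₀ solves ψ₀'' = ((−1+h⁰t)²−1)ψ₀ on [0,∞) with ψ₀(0)=1, ψ₀'(0)=0, ψ₀>0, ψ₀'<0 on (0,∞), and ψ₀(t), ψ₀'(t) → 0 exponentially as t→∞ (so that (−1+h⁰t)²ψ₀(t)² → 0). Then ∫₀^∞ ψ₀(t)² (−1 + h⁰ t) dt = 0. -/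
/-!
Multiply the equation `ψ'' = q ψ`, `q t = (-1 + h⁰ t)² - 1`, by `ψ'`: the energy
`E = ψ'² / 2 - q ψ² / 2` satisfies `E' = -q' ψ² / 2 = -h⁰ (-1 + h⁰ t) ψ²`. Since `ψ'(0) = 0`
and `q(0) = 0`, the energy vanishes at `0`, and it vanishes at infinity by the decay of `ψ`
and `ψ'`. Hence the integral of `E'` over `(0, ∞)` is zero.
-/

open Set Filter MeasureTheory Topology Real

noncomputable def energy (ψ ψ' q : ℝ → ℝ) (t : ℝ) : ℝ :=
  ψ' t ^ 2 / 2 - q t * ψ t ^ 2 / 2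

theorem hasDerivAt_energy {ψ ψ' q : ℝ → ℝ} {q' t : ℝ} (hψ : HasDerivAt ψ (ψ' t) t)
    (hψ' : HasDerivAt ψ' (q t * ψ t) t) (hq : HasDerivAt q q' t) :
    HasDerivAt (energy ψ ψ' q) (-(q' * ψ t ^ 2 / 2)) t := by
  refine (((hψ'.pow 2).div_const 2).sub ((hq.mul (hψ.pow 2)).div_const 2)).congr_deriv ?_
  simp only [Pi.pow_apply]
  ring

theorem continuousWithinAt_energy {ψ ψ' q : ℝ → ℝ} {s : Set ℝ} {a M : ℝ}
    (hψ' : ContinuousAt ψ' a) (hq : ContinuousAt q a) (hqa : q a = 0)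
    (hψ : ∀ᶠ t in 𝓝[s] a, |ψ t| ≤ M) : ContinuousWithinAt (energy ψ ψ' q) s a := by
  have hqψ : Tendsto (fun t => q t * ψ t ^ 2) (𝓝[s] a) (𝓝 0) := by
    refine Tendsto.zero_mul_isBoundedUnder_le (tendsto_nhdsWithin_of_tendsto_nhds (hqa ▸ hq))
      (isBoundedUnder_of_eventually_le (a := M ^ 2) ?_)
    filter_upwards [hψ] with t ht
    simpa [sq_abs] using pow_le_pow_left₀ (abs_nonneg _) ht 2
  show Tendsto (fun t => ψ' t ^ 2 / 2 - q t * ψ t ^ 2 / 2) _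
    (𝓝 (ψ' a ^ 2 / 2 - q a * ψ a ^ 2 / 2))
  simpa [hqa] using ((hψ'.pow 2).div_const 2).continuousWithinAt.tendsto.sub (hqψ.div_const 2)

theorem integral_deriv_mul_sq_eq_energy {ψ ψ' q q' : ℝ → ℝ}
    (hψ : ∀ t ∈ Ioi (0:ℝ), HasDerivAt ψ (ψ' t) t)
    (hψ' : ∀ t ∈ Ioi (0:ℝ), HasDerivAt ψ' (q t * ψ t) t)
    (hq : ∀ t ∈ Ioi (0:ℝ), HasDerivAt q (q' t) t)
    (hcont : ContinuousWithinAt (energy ψ ψ' q) (Ici 0) 0)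
    (htop : Tendsto (energy ψ ψ' q) atTop (𝓝 0))
    (hint : IntegrableOn (fun t => q' t * ψ t ^ 2) (Ioi 0)) :
    ∫ t in Ioi (0:ℝ), q' t * ψ t ^ 2 = 2 * energy ψ ψ' q 0 := by
  have hFTC := integral_Ioi_of_hasDerivAt_of_tendsto hcont
    (fun t ht => hasDerivAt_energy (hψ t ht) (hψ' t ht) (hq t ht)) ((hint.div_const 2).neg) htop
  rw [integral_neg, integral_div] at hFTC
  linarith

theorem abs_sq_le_of_abs_le_exp {x C c t : ℝ} (h : |x| ≤ C * exp (-c * t)) :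
    |x ^ 2| ≤ C ^ 2 * exp (-(2 * c) * t) :=
  calc |x ^ 2| = |x| ^ 2 := abs_pow x 2
    _ ≤ (C * exp (-c * t)) ^ 2 := pow_le_pow_left₀ (abs_nonneg x) h 2
    _ = C ^ 2 * exp (-(2 * c) * t) := by rw [mul_pow, ← exp_nat_mul]; ring_nf

theorem tendsto_zero_of_abs_le_exp {f : ℝ → ℝ} {C c : ℝ} (hc : 0 < c)
    (hf : ∀ᶠ t in atTop, |f t| ≤ C * exp (-c * t)) : Tendsto f atTop (𝓝 0) := by
  refine squeeze_zero_norm' hf ?_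
  have : Tendsto (fun t => -c * t) atTop atBot := tendsto_id.const_mul_atTop_of_neg (by linarith)
  simpa using (tendsto_exp_atBot.comp this).const_mul C

theorem integrableOn_Ioi_mul_affine_of_abs_le_exp {f : ℝ → ℝ} {C c : ℝ} (hc : 0 < c)
    (hfm : AEStronglyMeasurable f (volume.restrict (Ioi 0)))
    (hf : ∀ t ∈ Ioi (0:ℝ), |f t| ≤ C * exp (-c * t)) (a b : ℝ) :
    IntegrableOn (fun t => (a + b * t) * f t) (Ioi 0) := by
  have hexp : IntegrableOn (fun t => exp (-c * t)) (Ioi 0) := by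
    simpa using exp_neg_integrableOn_Ioi 0 hc
  have hmul : IntegrableOn (fun t => t * exp (-c * t)) (Ioi 0) := by
    refine (integrableOn_rpow_mul_exp_neg_mul_rpow (s := 1) (p := 1) (by norm_num) one_pos hc
      ).congr_fun (fun t _ => ?_) measurableSet_Ioi
    simp
  refine Integrable.mono' ((hexp.const_mul (C * |a|)).add (hmul.const_mul (C * |b|)))
    ((by fun_prop : Continuous fun t => a + b * t).aestronglyMeasurable.mul hfm) ?_
  rw [ae_restrict_iff' measurableSet_Ioi]
  refine ae_of_all _ fun t (ht : 0 < t) => ?_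
  have haff : |a + b * t| ≤ |a| + |b| * t :=
    (abs_add_le _ _).trans_eq (by rw [abs_mul, abs_of_pos ht])
  calc ‖(a + b * t) * f t‖ = |a + b * t| * |f t| := by rw [Real.norm_eq_abs, abs_mul]
    _ ≤ (|a| + |b| * t) * (C * exp (-c * t)) :=
        mul_le_mul haff (hf t ht) (abs_nonneg _) ((abs_nonneg _).trans haff)
    _ = C * |a| * exp (-c * t) + C * |b| * (t * exp (-c * t)) := by ring

theorem stmt_8_general (h0 : ℝ) (hh0 : 0 < h0) (ψ : ℝ → ℝ)
    (hinit' : deriv ψ 0 = 0)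
    (hode : ∀ t ∈ Ici (0:ℝ),
      HasDerivAt (deriv ψ) (((-1 + h0 * t)^2 - 1) * ψ t) t)
    (hdec : ∀ t ∈ Ioi (0:ℝ), deriv ψ t < 0)
    (hexp : ∃ C c : ℝ, 0 < C ∧ 0 < c ∧ ∀ t ∈ Ici (0:ℝ),
      |ψ t| ≤ C * Real.exp (-c * t) ∧ |deriv ψ t| ≤ C * Real.exp (-c * t))
    (hlim : Tendsto (fun t => (-1 + h0 * t)^2 * (ψ t)^2) atTop (nhds 0)) :
    ∫ t in Ioi (0:ℝ), (ψ t)^2 * (-1 + h0 * t) = 0 := by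
  obtain ⟨C, c, hC, hc, hbound⟩ := hexp
  set q : ℝ → ℝ := fun t => (-1 + h0 * t) ^ 2 - 1
  have hψ t (ht : t ∈ Ioi (0:ℝ)) : HasDerivAt ψ (deriv ψ t) t :=
    (differentiableAt_of_deriv_ne_zero (hdec t ht).ne).hasDerivAt
  have hq t : HasDerivAt q (2 * h0 * (-1 + h0 * t)) t :=
    (((((hasDerivAt_id t).const_mul h0).const_add (-1)).pow 2).sub_const 1).congr_deriv
      (by simp only [id, Nat.cast_ofNat, pow_one, mul_one, Nat.add_one_sub_one]; ring)
  -- `ψ` need not be continuous at `0`, but it is bounded there and `q 0 = 0`.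
  have hcont : ContinuousWithinAt (energy ψ (deriv ψ) q) (Ici 0) 0 := by
    refine continuousWithinAt_energy (hode 0 self_mem_Ici).continuousAt (hq 0).continuousAt
      (by norm_num [q]) (M := C) (eventually_nhdsWithin_of_forall fun t (ht : 0 ≤ t) => ?_)
    exact (hbound t ht).1.trans
      (mul_le_of_le_one_right hC.le (exp_le_one_iff.2 (by nlinarith)))
  have htop : Tendsto (energy ψ (deriv ψ) q) atTop (𝓝 0) := by
    have hsq {f : ℝ → ℝ} (hf : ∀ t ∈ Ici (0:ℝ), |f t| ≤ C * exp (-c * t)) :=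
      tendsto_zero_of_abs_le_exp (f := fun t => f t ^ 2) (mul_pos two_pos hc)
        ((eventually_ge_atTop 0).mono fun t ht => abs_sq_le_of_abs_le_exp (hf t ht))
    have hE : energy ψ (deriv ψ) q =
        fun t => (deriv ψ t ^ 2 - (-1 + h0 * t) ^ 2 * ψ t ^ 2 + ψ t ^ 2) / 2 := by
      funext t; simp only [energy, q]; ring
    simpa [hE] using (((hsq fun t ht => (hbound t ht).2).sub hlim).add
      (hsq fun t ht => (hbound t ht).1)).div_const 2
  have hint : IntegrableOn (fun t => 2 * h0 * (-1 + h0 * t) * ψ t ^ 2) (Ioi 0) := by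
    refine integrableOn_Ioi_mul_affine_of_abs_le_exp (mul_pos two_pos hc) ?_
      (fun t ht => abs_sq_le_of_abs_le_exp (hbound t (mem_Ici.2 ht.le)).1) (-2 * h0) (2 * h0 * h0)
      |>.congr_fun (fun t _ => by ring) measurableSet_Ioi
    exact (ContinuousOn.pow (fun t ht => (hψ t ht).continuousAt.continuousWithinAt) 2
      ).aestronglyMeasurable measurableSet_Ioi
  have key := integral_deriv_mul_sq_eq_energy hψ (fun t ht => hode t (mem_Ici.2 ht.le))
    (fun t _ => hq t) hcont htop hint
  simp_rw [mul_assoc, integral_const_mul, energy, hinit'] at key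
  norm_num [hh0.ne'] at key
  simpa only [mul_comm] using key

/-- For the decaying positive solution ψ₀ of ψ'' = ((-1+h⁰t)²-1)ψ,
the integral ∫₀^∞ ψ₀²(-1+h⁰t) dt vanishes. -/
theorem stmt_8 (h0 : ℝ) (hh0 : 0 < h0) (ψ : ℝ → ℝ)
    (hinit : ψ 0 = 1) (hinit' : deriv ψ 0 = 0)
    (hode : ∀ t ∈ Ici (0:ℝ),
      HasDerivAt (deriv ψ) (((-1 + h0 * t)^2 - 1) * ψ t) t)
    (hpos : ∀ t ∈ Ioi (0:ℝ), 0 < ψ t)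
    (hdec : ∀ t ∈ Ioi (0:ℝ), deriv ψ t < 0)
    (hexp : ∃ C c : ℝ, 0 < C ∧ 0 < c ∧ ∀ t ∈ Ici (0:ℝ),
      |ψ t| ≤ C * Real.exp (-c * t) ∧ |deriv ψ t| ≤ C * Real.exp (-c * t))
    (hlim : Tendsto (fun t => (-1 + h0 * t)^2 * (ψ t)^2) atTop (nhds 0)) :
    ∫ t in Ioi (0:ℝ), (ψ t)^2 * (-1 + h0 * t) = 0 :=
  stmt_8_general h0 hh0 ψ hinit' hode hdec hexp hlim
end

section
/- Let (ψ,A) solve ψ'' = ψ(β²ψ²+A²−1), A'' = rβ²ψ²A on [−m,M] with ψ'(−m)=ψ'(M)=0 and A'(−m)=A'(M)=h, where β,r>0. Then the quantity Q = (1/β²)∫_{−m}^{M}( ψ²(β²ψ²/2 − 1 + A²) + (ψ')² + (A'−h)²/(rβ²) ) dt satisfies Q = ∫_{−m}^{M}( r(∫_t^M ψ(s)²A(s) ds)² − ψ(t)⁴/2 ) dt. -/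
/-!
Multiplying the equation for `ψ` by `ψ` and using `ψ ψ'' + ψ'² = (ψ ψ')'` together with
`ψ'(-m) = ψ'(M) = 0`, the terms `ψ²(A² - 1) + ψ'²` integrate to `-β² ∫ ψ⁴`.
Integrating `A'' = r β² ψ² A` from `t` to `M` gives `A'(t) - h = -r β² ∫_t^M ψ² A`,
which turns `(A' - h)² / (r β²)` into `r β² (∫_t^M ψ² A)²`.
-/

open Set intervalIntegral

lemma ContDiff.differentiable_deriv_of_two {f : ℝ → ℝ} (hf : ContDiff ℝ 2 f) :
    Differentiable ℝ (deriv f) :=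
  (hf.deriv' (n := 1)).differentiable one_ne_zero

lemma ContDiff.continuous_deriv_deriv {f : ℝ → ℝ} (hf : ContDiff ℝ 2 f) :
    Continuous (deriv (deriv f)) :=
  (hf.deriv' (n := 1)).continuous_deriv le_rfl

lemma integral_deriv_sq_add_mul_deriv_deriv_eq_zero {f : ℝ → ℝ} {a b : ℝ}
    (hf : ContDiff ℝ 2 f) (ha : deriv f a = 0) (hb : deriv f b = 0) :
    ∫ t in a..b, (deriv f t * deriv f t + f t * deriv (deriv f) t) = 0 := by
  have hf' := hf.differentiable_deriv_of_two
  rw [integral_deriv_mul_eq_sub (fun x _ ↦ (hf.differentiable two_ne_zero x).hasDerivAt)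
    (fun x _ ↦ (hf' x).hasDerivAt) (hf'.continuous.intervalIntegrable _ _)
    (hf.continuous_deriv_deriv.intervalIntegrable _ _), ha, hb]
  ring

lemma deriv_sub_deriv_eq_integral_of_eqOn {f g : ℝ → ℝ} {t b : ℝ} (hf : ContDiff ℝ 2 f)
    (htb : t ≤ b) (hfg : EqOn (deriv (deriv f)) g (Icc t b)) :
    deriv f b - deriv f t = ∫ s in t..b, g s := by
  rw [← integral_deriv_eq_sub (fun x _ ↦ hf.differentiable_deriv_of_two x)
    (hf.continuous_deriv_deriv.intervalIntegrable _ _)]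
  exact integral_congr fun s hs ↦ hfg (uIcc_of_le htb ▸ hs)

lemma continuous_integral_lower_limit {f : ℝ → ℝ} (hf : Continuous f) (b : ℝ) :
    Continuous fun t ↦ ∫ s in t..b, f s := by
  simp_rw [integral_symm b]
  exact (continuous_primitive (fun _ _ ↦ hf.intervalIntegrable _ _) b).neg

lemma energy_integrand_eq {β r ψ ψ' ψ'' A a I : ℝ} (hβ : β ≠ 0)
    (hψ'' : ψ'' = ψ * (β ^ 2 * ψ ^ 2 + A ^ 2 - 1)) (ha : a = -(r * β ^ 2) * I) :
    1 / β ^ 2 * (ψ ^ 2 * (β ^ 2 * ψ ^ 2 / 2 - 1 + A ^ 2) + ψ' ^ 2 + a ^ 2 / (r * β ^ 2))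
      = r * I ^ 2 - ψ ^ 4 / 2 + 1 / β ^ 2 * (ψ' * ψ' + ψ * ψ'') := by
  have ha' : a ^ 2 / (r * β ^ 2) = r * β ^ 2 * I ^ 2 := by
    rcases eq_or_ne r 0 with rfl | hr
    · simp
    · rw [ha]; field_simp
  rw [ha', hψ'']
  field_simp
  ring

theorem stmt_10_general (m M h r β : ℝ) (hmM : -m < M) (hβ : 0 < β)
    (ψ A : ℝ → ℝ) (hψ : ContDiff ℝ 2 ψ) (hA : ContDiff ℝ 2 A)
    (hode1 : ∀ t ∈ Icc (-m) M,
      deriv (deriv ψ) t = ψ t * (β^2 * (ψ t)^2 + (A t)^2 - 1))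
    (hode2 : ∀ t ∈ Icc (-m) M,
      deriv (deriv A) t = r * β^2 * (ψ t)^2 * A t)
    (hbcψ : deriv ψ (-m) = 0 ∧ deriv ψ M = 0)
    (hbcA : deriv A (-m) = h ∧ deriv A M = h) :
    (1/β^2) * ∫ t in (-m)..M,
        ((ψ t)^2 * (β^2 * (ψ t)^2 / 2 - 1 + (A t)^2) + (deriv ψ t)^2
          + (deriv A t - h)^2 / (r * β^2))
      = ∫ t in (-m)..M,
        (r * (∫ s in t..M, (ψ s)^2 * A s)^2 - (ψ t)^4 / 2) := by
  have hA' : ∀ t ∈ Icc (-m) M, deriv A t - h = -(r * β ^ 2) * ∫ s in t..M, (ψ s)^2 * A s := by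
    intro t ht
    have hint := deriv_sub_deriv_eq_integral_of_eqOn (g := fun s ↦ r * β ^ 2 * ((ψ s)^2 * A s))
      hA ht.2 fun s hs ↦ (hode2 s ⟨ht.1.trans hs.1, hs.2⟩).trans (by ring)
    rw [integral_const_mul, hbcA.2] at hint
    linarith
  have hI := continuous_integral_lower_limit (hψ.continuous.pow 2 |>.mul hA.continuous) M
  have hψ' := hψ.continuous_deriv one_le_two
  have hψ'' := hψ.continuous_deriv_deriv
  rw [← integral_const_mul, integral_congr fun t ht ↦ energy_integrand_eq hβ.ne'
      (hode1 t (uIcc_of_le hmM.le ▸ ht)) (hA' t (uIcc_of_le hmM.le ▸ ht)),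
    integral_add, integral_const_mul,
    integral_deriv_sq_add_mul_deriv_deriv_eq_zero hψ hbcψ.1 hbcψ.2, mul_zero, add_zero]
  all_goals apply Continuous.intervalIntegrable; fun_prop

/-- The rescaled energy Q reduces to
∫ ( r(∫_t^M ψ²A)² - ψ⁴/2 ) dt. -/
theorem stmt_10 (m M h r β : ℝ) (hmM : -m < M) (hr : 0 < r) (hβ : 0 < β)
    (ψ A : ℝ → ℝ) (hψ : ContDiff ℝ 2 ψ) (hA : ContDiff ℝ 2 A)
    (hode1 : ∀ t ∈ Icc (-m) M,
      deriv (deriv ψ) t = ψ t * (β^2 * (ψ t)^2 + (A t)^2 - 1))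
    (hode2 : ∀ t ∈ Icc (-m) M,
      deriv (deriv A) t = r * β^2 * (ψ t)^2 * A t)
    (hbcψ : deriv ψ (-m) = 0 ∧ deriv ψ M = 0)
    (hbcA : deriv A (-m) = h ∧ deriv A M = h) :
    (1/β^2) * ∫ t in (-m)..M,
        ((ψ t)^2 * (β^2 * (ψ t)^2 / 2 - 1 + (A t)^2) + (deriv ψ t)^2
          + (deriv A t - h)^2 / (r * β^2))
      = ∫ t in (-m)..M,
        (r * (∫ s in t..M, (ψ s)^2 * A s)^2 - (ψ t)^4 / 2) :=
  stmt_10_general m M h r β hmM hβ ψ A hψ hA hode1 hode2 hbcψ hbcA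
end

section
/- Let ψ₀ solve ψ₀'' = ψ₀((−1+h⁰t)²−1) on [0,∞) with ψ₀(0)=1, ψ₀'(0)=0, and suppose 0<ψ₀≤1, ψ₀'≤0, with ψ₀ and ψ₀' decaying exponentially. Define H(t) = ∫_t^∞ ψ₀(s)²(−1+h⁰s) ds and q = ψ₀'/ψ₀. Then H(t) = −ψ₀(t)² q'(t) / (2h⁰) for all t ≥ 0. -/
open Set MeasureTheory Filter Topology Asymptotics

/-!
With V(t) = (−1 + h⁰t)² − 1, the Riccati equation q' = V − q² for q = ψ₀'/ψ₀ gives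
−ψ₀²q' = ψ₀'² − Vψ₀² =: E. Along solutions of ψ₀'' = Vψ₀ the energy E satisfies
E' = −V'ψ₀² = −2h⁰(−1 + h⁰t)ψ₀², and E → 0 at infinity by the exponential decay,
so H = E/(2h⁰).

Here ψ₀' is `deriv ψ`, so differentiability of ψ on (0, ∞) has to be recovered:
ψ₀' starts at 0, decreases while V < 0 (t < 2/h⁰) and then increases to its limit 0,
hence ψ₀' < 0 on (0, ∞). At t = 0 both sides vanish: E(0) = ψ₀'(0)² = 0, and
q = ψ₀' · ψ₀⁻¹ has right derivative 0 there since ψ₀'(0) = ψ₀''(0) = 0 and ψ₀⁻¹ stays bounded.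
-/

theorem hasDerivAt_sq_sub_mul_sq {f g V : ℝ → ℝ} {x V' : ℝ} (hf : HasDerivAt f (g x) x)
    (hg : HasDerivAt g (V x * f x) x) (hV : HasDerivAt V V' x) :
    HasDerivAt (fun y => g y ^ 2 - V y * f y ^ 2) (-(V' * f x ^ 2)) x := by
  refine ((hg.fun_pow 2).fun_sub (hV.fun_mul (hf.fun_pow 2))).congr_deriv ?_
  push_cast
  ring

theorem neg_sq_mul_deriv_div_eq {f g V : ℝ → ℝ} {x : ℝ} (hf : HasDerivAt f (g x) x)
    (hg : HasDerivAt g (V x * f x) x) (hx : f x ≠ 0) :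
    -f x ^ 2 * deriv (fun y => g y / f y) x = g x ^ 2 - V x * f x ^ 2 := by
  rw [(hg.fun_div hf hx).deriv]
  field_simp
  ring

theorem integral_Ioi_deriv_mul_sq_eq {f g V V' : ℝ → ℝ} {a : ℝ}
    (hf : ∀ x ∈ Ioi a, HasDerivAt f (g x) x) (hg : ∀ x ∈ Ioi a, HasDerivAt g (V x * f x) x)
    (hV : ∀ x, HasDerivAt V (V' x) x)
    (hcont : ContinuousWithinAt (fun x => g x ^ 2 - V x * f x ^ 2) (Ici a) a)
    (hint : IntegrableOn (fun x => V' x * f x ^ 2) (Ioi a))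
    (hlim : Tendsto (fun x => g x ^ 2 - V x * f x ^ 2) atTop (𝓝 0)) :
    ∫ x in Ioi a, V' x * f x ^ 2 = g a ^ 2 - V a * f a ^ 2 := by
  have := integral_Ioi_of_hasDerivAt_of_tendsto hcont.neg
    (fun x hx => (hasDerivAt_sq_sub_mul_sq (hf x hx) (hg x hx) (hV x)).neg)
    (by simpa using hint) hlim.neg
  simpa using this

theorem HasDerivWithinAt.mul_isBigO_one {f h : ℝ → ℝ} {s : Set ℝ} {x : ℝ}
    (hf : HasDerivWithinAt f 0 s x) (hfx : f x = 0) (hh : h =O[𝓝[s] x] fun _ => (1 : ℝ)) :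
    HasDerivWithinAt (fun y => f y * h y) 0 s x := by
  rw [hasDerivWithinAt_iff_isLittleO] at hf ⊢
  simpa [hfx] using hf.mul_isBigO hh

theorem deriv_eq_zero_of_hasDerivWithinAt_Ioi {f : ℝ → ℝ} {x : ℝ}
    (h : HasDerivWithinAt f 0 (Ioi x) x) : deriv f x = 0 := by
  by_cases hd : DifferentiableAt ℝ f x
  · rw [← hd.derivWithin (uniqueDiffWithinAt_Ioi x), h.derivWithin (uniqueDiffWithinAt_Ioi x)]
  · exact deriv_zero_of_not_differentiableAt hd

theorem deriv_div_eq_zero_of_antitoneOn {f g : ℝ → ℝ} {a : ℝ}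
    (hg : HasDerivWithinAt g 0 (Ioi a) a) (hga : g a = 0) (hf : AntitoneOn f (Ioi a))
    (hf_pos : ∀ x ∈ Ioi a, 0 < f x) : deriv (fun x => g x / f x) a = 0 := by
  refine deriv_eq_zero_of_hasDerivWithinAt_Ioi (hg.mul_isBigO_one hga ?_)
  have ha : a + 1 ∈ Ioi a := lt_add_one a
  refine IsBigO.of_bound (f (a + 1))⁻¹ ?_
  filter_upwards [Ioc_mem_nhdsGT ha] with x hx
  rw [norm_inv, Real.norm_of_nonneg (hf_pos x hx.1).le, norm_one, mul_one]
  exact inv_anti₀ (hf_pos _ ha) (hf hx.1 ha hx.2)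

theorem abs_neg_one_add_mul_mul_exp_le {a b x : ℝ} (ha : 0 ≤ a) (hb : 0 < b) (hx : 0 ≤ x) :
    |-1 + a * x| * Real.exp (-b * x) ≤ (1 + 2 * a / b) * Real.exp (-(b / 2) * x) := by
  have hax : a * x ≤ 2 * a / b * Real.exp (b / 2 * x) := by
    have := Real.add_one_le_exp (b / 2 * x)
    calc a * x = 2 * a / b * (b / 2 * x) := by field_simp
      _ ≤ 2 * a / b * Real.exp (b / 2 * x) := by gcongr; linarith
  have hexp : 1 ≤ Real.exp (b / 2 * x) := Real.one_le_exp (by positivity)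
  calc |-1 + a * x| * Real.exp (-b * x) ≤ (1 + a * x) * Real.exp (-b * x) := by
        gcongr; rw [abs_le]; constructor <;> nlinarith [mul_nonneg ha hx]
    _ ≤ (1 + 2 * a / b) * Real.exp (b / 2 * x) * Real.exp (-b * x) := by
        gcongr; nlinarith
    _ = (1 + 2 * a / b) * Real.exp (-(b / 2) * x) := by
        rw [mul_assoc, ← Real.exp_add]; ring_nf

theorem abs_neg_one_add_mul_mul_le {φ : ℝ → ℝ} {a C c t : ℝ} (ha : 0 ≤ a) (hC : 0 ≤ C)
    (hc : 0 < c) (ht : 0 ≤ t) (hφ : |φ t| ≤ C * Real.exp (-c * t)) :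
    |(-1 + a * t) * φ t| ≤ C * (1 + 2 * a / c) * Real.exp (-(c / 2) * t) :=
  calc |(-1 + a * t) * φ t| ≤ |-1 + a * t| * (C * Real.exp (-c * t)) := by
        rw [abs_mul]; gcongr
    _ = C * (|-1 + a * t| * Real.exp (-c * t)) := by ring
    _ ≤ C * ((1 + 2 * a / c) * Real.exp (-(c / 2) * t)) :=
        mul_le_mul_of_nonneg_left (abs_neg_one_add_mul_mul_exp_le ha hc ht) hC
    _ = C * (1 + 2 * a / c) * Real.exp (-(c / 2) * t) := by ring

theorem tendsto_zero_of_abs_le_exp_s14 {φ : ℝ → ℝ} {a C c : ℝ} (hc : 0 < c)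
    (h : ∀ t ∈ Ici a, |φ t| ≤ C * Real.exp (-c * t)) : Tendsto φ atTop (𝓝 0) := by
  have hexp : Tendsto (fun t => C * Real.exp (-c * t)) atTop (𝓝 0) := by
    simpa using (Real.tendsto_exp_atBot.comp
      (tendsto_id.const_mul_atTop_of_neg (neg_lt_zero.2 hc))).const_mul C
  refine squeeze_zero_norm' ?_ hexp
  filter_upwards [eventually_ge_atTop a] with t ht using h t ht

theorem integrableOn_Ioi_of_abs_le_exp {φ : ℝ → ℝ} {a C c : ℝ} (hc : 0 < c)
    (hφ : ContinuousOn φ (Ioi a)) (h : ∀ t ∈ Ioi a, |φ t| ≤ C * Real.exp (-c * t)) :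
    IntegrableOn φ (Ioi a) := by
  refine Integrable.mono' ((exp_neg_integrableOn_Ioi a hc).const_mul C)
    (hφ.aestronglyMeasurable measurableSet_Ioi) ?_
  rw [ae_restrict_iff' measurableSet_Ioi]
  exact ae_of_all _ h

section

variable {h0 : ℝ} {ψ : ℝ → ℝ}

theorem deriv_lt_zero_of_ode (hh0 : 0 < h0) (hg0 : deriv ψ 0 = 0)
    (hode : ∀ t ∈ Ici (0:ℝ), HasDerivAt (deriv ψ) (((-1 + h0 * t) ^ 2 - 1) * ψ t) t)
    (hpos : ∀ t ∈ Ici (0:ℝ), 0 < ψ t) (hlim : Tendsto (deriv ψ) atTop (𝓝 0))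
    {t : ℝ} (ht : 0 < t) : deriv ψ t < 0 := by
  have hcont : ContinuousOn (deriv ψ) (Ici 0) :=
    fun x hx => (hode x hx).continuousAt.continuousWithinAt
  have hturn : 0 < 2 / h0 := by positivity
  rcases le_or_gt t (2 / h0) with hle | hlt
  · have hanti : StrictAntiOn (deriv ψ) (Icc 0 (2 / h0)) := by
      refine strictAntiOn_of_hasDerivWithinAt_neg (convex_Icc _ _)
        (f' := fun x => ((-1 + h0 * x) ^ 2 - 1) * ψ x)
        (hcont.mono Icc_subset_Ici_self) (fun x hx => ?_) fun x hx => ?_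
      · rw [interior_Icc] at hx
        exact (hode x hx.1.le).hasDerivWithinAt
      · rw [interior_Icc] at hx
        have hx2 : h0 * x < 2 := by
          have := hx.2; rwa [lt_div_iff₀ hh0, mul_comm] at this
        nlinarith [mul_pos (mul_pos hh0 hx.1) (hpos x hx.1.le)]
    simpa [hg0] using hanti ⟨le_rfl, hturn.le⟩ ⟨ht.le, hle⟩ ht
  · have hmono : StrictMonoOn (deriv ψ) (Ici (2 / h0)) := by
      refine strictMonoOn_of_hasDerivWithinAt_pos (convex_Ici _)
        (f' := fun x => ((-1 + h0 * x) ^ 2 - 1) * ψ x)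
        (hcont.mono (Ici_subset_Ici.2 hturn.le)) (fun x hx => ?_) fun x hx => ?_
      · rw [interior_Ici] at hx
        exact (hode x (hturn.trans hx).le).hasDerivWithinAt
      · rw [interior_Ici] at hx
        have hx2 : 2 < h0 * x := by
          have := hx.out; rwa [div_lt_iff₀ hh0, mul_comm] at this
        have hx0 : 0 < x := hturn.trans hx
        nlinarith [mul_pos (mul_pos hh0 hx0) (hpos x hx0.le)]
    have hmem : t + 1 ∈ Ici (2 / h0) := mem_Ici.2 (by linarith)
    calc deriv ψ t < deriv ψ (t + 1) := hmono hlt.le hmem (lt_add_one t)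
      _ ≤ 0 := ge_of_tendsto hlim <| by
        filter_upwards [eventually_ge_atTop (t + 1)] with s hs
        exact hmono.monotoneOn hmem (mem_Ici.2 (hmem.out.trans hs)) hs

theorem integrableOn_sq_mul_of_abs_le_exp {C c : ℝ} (hh0 : 0 ≤ h0) (hC : 0 ≤ C) (hc : 0 < c)
    (hψ_cont : ContinuousOn ψ (Ioi 0)) (hψ1 : ∀ t ∈ Ici (0:ℝ), |ψ t| ≤ 1)
    (hψ_exp : ∀ t ∈ Ici (0:ℝ), |ψ t| ≤ C * Real.exp (-c * t)) :
    IntegrableOn (fun s => ψ s ^ 2 * (-1 + h0 * s)) (Ioi 0) := by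
  refine integrableOn_Ioi_of_abs_le_exp (C := C * (1 + 2 * h0 / c)) (half_pos hc)
    (by fun_prop) fun t ht => ?_
  have ht' : t ∈ Ici (0:ℝ) := mem_Ici.2 (le_of_lt ht)
  calc |ψ t ^ 2 * (-1 + h0 * t)| = |ψ t| * |(-1 + h0 * t) * ψ t| := by
        rw [← abs_mul]; ring_nf
    _ ≤ 1 * (C * (1 + 2 * h0 / c) * Real.exp (-(c / 2) * t)) :=
        mul_le_mul (hψ1 t ht') (abs_neg_one_add_mul_mul_le hh0 hC hc ht'.out (hψ_exp t ht'))
          (abs_nonneg _) zero_le_one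
    _ = C * (1 + 2 * h0 / c) * Real.exp (-(c / 2) * t) := one_mul _

theorem tendsto_energy_atTop {C c : ℝ} (hh0 : 0 ≤ h0) (hC : 0 ≤ C) (hc : 0 < c)
    (hbound : ∀ t ∈ Ici (0:ℝ),
      |ψ t| ≤ C * Real.exp (-c * t) ∧ |deriv ψ t| ≤ C * Real.exp (-c * t)) :
    Tendsto (fun x => deriv ψ x ^ 2 - ((-1 + h0 * x) ^ 2 - 1) * ψ x ^ 2) atTop (𝓝 0) := by
  have hg := tendsto_zero_of_abs_le_exp_s14 hc fun t ht => (hbound t ht).2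
  have hψ := tendsto_zero_of_abs_le_exp_s14 hc fun t ht => (hbound t ht).1
  have hw := tendsto_zero_of_abs_le_exp_s14 (half_pos hc) fun t (ht : t ∈ Ici 0) =>
    abs_neg_one_add_mul_mul_le hh0 hC hc ht (hbound t ht).1
  simpa using (hg.pow 2).sub ((hw.pow 2).sub (hψ.pow 2)) |>.congr fun x => by ring

theorem integral_Ioi_sq_mul_eq (hh0 : 0 < h0)
    (hψ' : ∀ t ∈ Ioi (0:ℝ), HasDerivAt ψ (deriv ψ t) t)
    (hode : ∀ t ∈ Ici (0:ℝ), HasDerivAt (deriv ψ) (((-1 + h0 * t) ^ 2 - 1) * ψ t) t)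
    (hψ1 : ∀ t ∈ Ici (0:ℝ), |ψ t| ≤ 1)
    (hint : IntegrableOn (fun s => ψ s ^ 2 * (-1 + h0 * s)) (Ioi 0))
    (hlim : Tendsto (fun x => deriv ψ x ^ 2 - ((-1 + h0 * x) ^ 2 - 1) * ψ x ^ 2) atTop (𝓝 0))
    {t : ℝ} (ht : 0 ≤ t) :
    ∫ s in Ioi t, ψ s ^ 2 * (-1 + h0 * s)
      = (deriv ψ t ^ 2 - ((-1 + h0 * t) ^ 2 - 1) * ψ t ^ 2) / (2 * h0) := by
  have hV : ∀ x, HasDerivAt (fun x => (-1 + h0 * x) ^ 2 - 1) (2 * h0 * (-1 + h0 * x)) x :=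
    fun x => ((((hasDerivAt_id' x).const_mul h0).const_add (-1)).fun_pow 2).sub_const 1
      |>.congr_deriv (by ring)
  have hcont : ContinuousWithinAt (fun x => deriv ψ x ^ 2 - ((-1 + h0 * x) ^ 2 - 1) * ψ x ^ 2)
      (Ici t) t := by
    rcases ht.eq_or_lt with rfl | ht
    · -- the potential vanishes at `0`, where `ψ` itself need not be continuous
      have hVψ : Tendsto (fun x => ((-1 + h0 * x) ^ 2 - 1) * ψ x ^ 2) (𝓝[Ici 0] 0) (𝓝 0) := by
        refine Tendsto.zero_mul_isBoundedUnder_le ?_ (isBoundedUnder_of_eventually_le (a := 1) ?_)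
        · simpa using (hV 0).continuousAt.tendsto.mono_left nhdsWithin_le_nhds
        · filter_upwards [self_mem_nhdsWithin] with x hx
          simpa [abs_pow] using hψ1 x hx
      have hg := (hode 0 self_mem_Ici).continuousAt.continuousWithinAt (s := Ici 0)
      simpa [ContinuousWithinAt] using (hg.tendsto.pow 2).sub hVψ
    · exact (hasDerivAt_sq_sub_mul_sq (hψ' t ht) (hode t ht.le) (hV t)).continuousAt
        |>.continuousWithinAt
  rw [← integral_Ioi_deriv_mul_sq_eq (fun x hx => hψ' x (ht.trans_lt hx))
    (fun x hx => hode x (ht.trans hx.out.le)) hV hcont ?_ hlim, ← integral_div]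
  · refine setIntegral_congr_fun measurableSet_Ioi fun x _ => ?_
    field_simp
  · exact IntegrableOn.congr_fun ((hint.mono_set (Ioi_subset_Ioi ht)).const_mul (2 * h0))
      (fun x _ => by ring) measurableSet_Ioi

end

theorem stmt_14_general (h0 : ℝ) (hh0 : 0 < h0) (ψ : ℝ → ℝ)
    (hinit' : deriv ψ 0 = 0)
    (hode : ∀ t ∈ Ici (0:ℝ),
      HasDerivAt (deriv ψ) (((-1 + h0 * t)^2 - 1) * ψ t) t)
    (hpos : ∀ t ∈ Ici (0:ℝ), 0 < ψ t ∧ ψ t ≤ 1)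
    (hexp : ∃ C c : ℝ, 0 < C ∧ 0 < c ∧ ∀ t ∈ Ici (0:ℝ),
      |ψ t| ≤ C * Real.exp (-c * t) ∧ |deriv ψ t| ≤ C * Real.exp (-c * t)) :
    ∀ t ∈ Ici (0:ℝ),
      (∫ s in Ioi t, (ψ s)^2 * (-1 + h0 * s))
        = -(ψ t)^2 * deriv (fun u => deriv ψ u / ψ u) t / (2 * h0) := by
  obtain ⟨C, c, hC, hc, hbound⟩ := hexp
  have hψ_pos : ∀ t ∈ Ici (0:ℝ), 0 < ψ t := fun t ht => (hpos t ht).1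
  have hψ1 : ∀ t ∈ Ici (0:ℝ), |ψ t| ≤ 1 := fun t ht =>
    abs_le.2 ⟨by linarith [hψ_pos t ht], (hpos t ht).2⟩
  have hg_neg : ∀ t ∈ Ioi (0:ℝ), deriv ψ t < 0 := fun t ht =>
    deriv_lt_zero_of_ode hh0 hinit' hode hψ_pos
      (tendsto_zero_of_abs_le_exp_s14 hc fun t ht => (hbound t ht).2) ht
  have hψ' : ∀ t ∈ Ioi (0:ℝ), HasDerivAt ψ (deriv ψ t) t := fun t ht =>
    (differentiableAt_of_deriv_ne_zero (hg_neg t ht).ne).hasDerivAt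
  have hint := integrableOn_sq_mul_of_abs_le_exp hh0.le hC.le hc
    (fun t ht => (hψ' t ht).continuousAt.continuousWithinAt) hψ1 fun t ht => (hbound t ht).1
  intro t ht
  rw [integral_Ioi_sq_mul_eq hh0 hψ' hode hψ1 hint
    (tendsto_energy_atTop hh0.le hC.le hc hbound) ht]
  rcases ht.out.eq_or_lt with rfl | ht
  · have hanti : AntitoneOn ψ (Ioi 0) := antitoneOn_of_hasDerivWithinAt_nonpos (convex_Ioi 0)
      (fun t ht => (hψ' t ht).continuousAt.continuousWithinAt)
      (fun t ht => (hψ' t (interior_subset ht)).hasDerivWithinAt)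
      fun t ht => (hg_neg t (interior_subset ht)).le
    have hg0 : HasDerivWithinAt (deriv ψ) 0 (Ioi 0) 0 := by
      simpa using (hode 0 self_mem_Ici).hasDerivWithinAt
    rw [deriv_div_eq_zero_of_antitoneOn hg0 hinit' hanti fun t ht => hψ_pos t ht.out.le, hinit']
    simp
  · rw [← neg_sq_mul_deriv_div_eq (V := fun x => (-1 + h0 * x) ^ 2 - 1)
      (hψ' t ht) (hode t ht.le) (hψ_pos t ht.le).ne']

/-- The tail integral H(t) = ∫_t^∞ ψ₀²(-1+h⁰s) ds equals -ψ₀(t)²q'(t)/(2h⁰),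
where q = ψ₀'/ψ₀. -/
theorem stmt_14 (h0 : ℝ) (hh0 : 0 < h0) (ψ : ℝ → ℝ)
    (hinit : ψ 0 = 1) (hinit' : deriv ψ 0 = 0)
    (hode : ∀ t ∈ Ici (0:ℝ),
      HasDerivAt (deriv ψ) (((-1 + h0 * t)^2 - 1) * ψ t) t)
    (hpos : ∀ t ∈ Ici (0:ℝ), 0 < ψ t ∧ ψ t ≤ 1)
    (hdec : ∀ t ∈ Ici (0:ℝ), deriv ψ t ≤ 0)
    (hexp : ∃ C c : ℝ, 0 < C ∧ 0 < c ∧ ∀ t ∈ Ici (0:ℝ),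
      |ψ t| ≤ C * Real.exp (-c * t) ∧ |deriv ψ t| ≤ C * Real.exp (-c * t)) :
    ∀ t ∈ Ici (0:ℝ),
      (∫ s in Ioi t, (ψ s)^2 * (-1 + h0 * s))
        = -(ψ t)^2 * deriv (fun u => deriv ψ u / ψ u) t / (2 * h0) :=
  stmt_14_general h0 hh0 ψ hinit' hode hpos hexp
end
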